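/- arXiv:1510.05579 — 2 statements merged into one kernel-verified Lean document; each statement's English description precedes it below -/
import Mathlib

section
/- Let r ≥ 2 be an integer, b = r² − 1, k ≥ 1 and ε ∈ {1, −1}, and assume r ≥ 3 when ε = −1. Then {1, b, c_k^(ε), c_{k+1}^(ε)} is a Diophantine quadruple and it satisfies the regularity identity (1 + b − c_k^(ε) − c_{k+1}^(ε))² = 4(b + 1)(c_k^(ε)·c_{k+1}^(ε) + 1). -/
/-- A Diophantine tuple: a finite set of positive integers such that the product of
any two distinct elements increased by 1 is a perfect square. -/
def IsDiophTuple (S : Finset ℤ) : Prop :=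
  (∀ x ∈ S, 0 < x) ∧ ∀ x ∈ S, ∀ y ∈ S, x ≠ y → ∃ w : ℤ, x * y + 1 = w ^ 2

/-- T_0 = 1, T_1 = r, T_{k+2} = 2r·T_{k+1} − T_k. -/
def seqT (r : ℤ) : ℕ → ℤ
  | 0 => 1
  | 1 => r
  | k + 2 => 2 * r * seqT r (k + 1) - seqT r k

/-- U_0 = 0, U_1 = 1, U_{k+2} = 2r·U_{k+1} − U_k. -/
def seqU (r : ℤ) : ℕ → ℤ
  | 0 => 0
  | 1 => 1
  | k + 2 => 2 * r * seqU r (k + 1) - seqU r k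

/-- c_k^(ε) = r²·U_k² + 2ε·T_k·U_k. -/
def cseq (r ε : ℤ) (k : ℕ) : ℤ :=
  r ^ 2 * seqU r k ^ 2 + 2 * ε * seqT r k * seqU r k

lemma seq_step (r : ℤ) : ∀ k : ℕ,
    seqT r (k + 1) = r * seqT r k + (r ^ 2 - 1) * seqU r k ∧
    seqU r (k + 1) = seqT r k + r * seqU r k := by
  intro k
  induction k with
  | zero => refine ⟨?_, ?_⟩ <;> simp [seqT, seqU]
  | succ n ih =>
    obtain ⟨h1, h2⟩ := ih
    constructor
    · show 2 * r * seqT r (n + 1) - seqT r n = _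
      linear_combination (2 * r - r) * h1 - (r ^ 2 - 1) * h2 + (r * 0) * h1
    · show 2 * r * seqU r (n + 1) - seqU r n = _
      linear_combination (-1 : ℤ) * h1 + (2 * r - r) * h2

lemma seq_pell (r : ℤ) : ∀ k : ℕ, (seqT r k) ^ 2 = (r ^ 2 - 1) * (seqU r k) ^ 2 + 1 := by
  intro k
  induction k with
  | zero => simp [seqT, seqU]
  | succ n ih =>
    obtain ⟨h1, h2⟩ := seq_step r n
    rw [h1, h2]
    linear_combination ih

lemma seq_bounds (r : ℤ) (hr : 2 ≤ r) : ∀ k : ℕ, 1 ≤ k →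
    1 ≤ seqU r k ∧ r ≤ seqT r k ∧ r - 1 ≤ seqT r k - seqU r k := by
  intro k hk
  induction k, hk using Nat.le_induction with
  | base => simp [seqT, seqU]
  | succ n hn ih =>
    obtain ⟨hU, hT, hTU⟩ := ih
    obtain ⟨h1, h2⟩ := seq_step r n
    rw [h1, h2]
    refine ⟨by nlinarith, by nlinarith, ?_⟩
    nlinarith [mul_nonneg (by linarith : (0:ℤ) ≤ r - 1) (by linarith : (0:ℤ) ≤ seqT r n - r),
      mul_nonneg (by nlinarith : (0:ℤ) ≤ r ^ 2 - r - 1) (by linarith : (0:ℤ) ≤ seqU r n - 1)]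

lemma seq_gap (r : ℤ) (hr : 2 ≤ r) : ∀ k : ℕ, 2 ≤ k →
    2 * r ^ 2 - 2 * r - 1 ≤ seqT r k - seqU r k := by
  intro k hk
  induction k, hk using Nat.le_induction with
  | base =>
    have : seqT r 2 = 2 * r * r - 1 ∧ seqU r 2 = 2 * r * 1 - 0 := by
      constructor <;> simp [seqT, seqU]
    rw [this.1, this.2]; ring_nf; linarith
  | succ n hn ih =>
    obtain ⟨hU, hT, hTU⟩ := seq_bounds r hr n (by omega)
    obtain ⟨h1, h2⟩ := seq_step r n
    rw [h1, h2]
    nlinarith [mul_nonneg (by linarith : (0:ℤ) ≤ r - 2) (by linarith : (0:ℤ) ≤ seqT r n),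
      mul_nonneg (by nlinarith : (0:ℤ) ≤ r ^ 2 - r) (by linarith : (0:ℤ) ≤ seqU r n - 1)]

lemma sq1 (r e t u : ℤ) (hP : t ^ 2 = (r ^ 2 - 1) * u ^ 2 + 1) (hE : e ^ 2 = 1) :
    (r ^ 2 * u ^ 2 + 2 * e * t * u) + 1 = (t + e * u) ^ 2 := by
  linear_combination -hP - u ^ 2 * hE

lemma sqb (r e t u : ℤ) (hP : t ^ 2 = (r ^ 2 - 1) * u ^ 2 + 1) (hE : e ^ 2 = 1) :
    (r ^ 2 - 1) * (r ^ 2 * u ^ 2 + 2 * e * t * u) + 1 = ((r ^ 2 - 1) * u + e * t) ^ 2 := by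
  linear_combination -hP - t ^ 2 * hE

lemma sqcc (r e t u : ℤ) (hP : t ^ 2 = (r ^ 2 - 1) * u ^ 2 + 1) (hE : e ^ 2 = 1) :
    (r ^ 2 * u ^ 2 + 2 * e * t * u) *
      (r ^ 2 * (t + r * u) ^ 2 + 2 * e * (r * t + (r ^ 2 - 1) * u) * (t + r * u)) + 1
    = ((t + e * u) * ((r * t + (r ^ 2 - 1) * u) + e * (t + r * u)) - r) ^ 2 := by
  linear_combination ((-1)*e^2 + r^2 + (-1)*u^2 + u^2*e^2 + (-1)*u^2*e^4 + (8)*u^2*r*e + (-6)*u^2*r*e^3 + (3)*u^2*r^2 + (-3)*u^2*r^2*e^2 + (-2)*u^2*r^3*e + (-1)*u^2*r^4 + (2)*t*u*e + (-2)*t*u*e^3 + (2)*t*u*r + (-2)*t*u*r*e^2 + (-4)*t*u*r^2*e + (-2)*t*u*r^3 + (-1)*t^2*e^2 + (-2)*t^2*r*e + (-1)*t^2*r^2) * hP + ((-1) + u^2 + (-1)*u^2*e^2 + (-6)*u^2*r*e + (-2)*u^2*r^2 + (-1)*u^4 + u^4*e^2 + (8)*u^4*r*e + (4)*u^4*r^2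 + (-2)*u^4*r^2*e^2 + (-8)*u^4*r^3*e + (-4)*u^4*r^4 + (-2)*t*u*e + (4)*t*u^3*e + (2)*t*u^3*r + (-2)*t*u^3*r*e^2 + (-8)*t*u^3*r^2*e + (-4)*t*u^3*r^3) * hE

lemma regid (r e t u : ℤ) (hP : t ^ 2 = (r ^ 2 - 1) * u ^ 2 + 1) (hE : e ^ 2 = 1) :
    (1 + (r ^ 2 - 1) - (r ^ 2 * u ^ 2 + 2 * e * t * u) -
      (r ^ 2 * (t + r * u) ^ 2 + 2 * e * (r * t + (r ^ 2 - 1) * u) * (t + r * u))) ^ 2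
    = 4 * ((r ^ 2 - 1) + 1) *
      ((r ^ 2 * u ^ 2 + 2 * e * t * u) *
        (r ^ 2 * (t + r * u) ^ 2 + 2 * e * (r * t + (r ^ 2 - 1) * u) * (t + r * u)) + 1) := by
  linear_combination ((4)*r^2*e^2 + (-1)*r^4 + (4)*u^2*r^2*e^2 + (-4)*u^2*r^3*e + u^2*r^4 + (-4)*u^2*r^4*e^2 + (4)*u^2*r^5*e + (3)*u^2*r^6 + (8)*t*u*r^4*e + (4)*t*u*r^5 + (4)*t^2*r^2*e^2 + (4)*t^2*r^3*e + t^2*r^4) * hP + ((4)*r^2) * hE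

lemma dfacts (r ε : ℤ) (hr : 2 ≤ r) (hε : ε = 1 ∨ ε = -1) (hr3 : ε = -1 → 3 ≤ r)
    (k : ℕ) (hk : 1 ≤ k) :
    2 ≤ seqT r k + ε * seqU r k ∧ seqT r k + ε * seqU r k ≠ r ∧
      seqT r k + ε * seqU r k < seqT r (k + 1) + ε * seqU r (k + 1) := by
  obtain ⟨hU1, hTr, hTU⟩ := seq_bounds r hr k hk
  obtain ⟨hT', hU'⟩ := seq_step r k
  rw [hT', hU']
  rcases hε with rfl | rfl
  · refine ⟨by linarith, by intro h; linarith, ?_⟩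
    nlinarith [mul_nonneg (by linarith : (0:ℤ) ≤ r) (by linarith : (0:ℤ) ≤ seqT r k),
      mul_nonneg (by nlinarith : (0:ℤ) ≤ r ^ 2 - 1) (by linarith : (0:ℤ) ≤ seqU r k)]
  · have hr' := hr3 rfl
    refine ⟨by linarith, ?_, ?_⟩
    · match k, hk with
      | 1, _ => simp only [seqT, seqU]; intro h; linarith
      | (n + 2), _ =>
        have hg := seq_gap r hr (n + 2) (by omega)
        have hrg : r < 2 * r ^ 2 - 2 * r - 1 := by nlinarith
        intro h; linarith
    · nlinarith [mul_nonneg (by linarith : (0:ℤ) ≤ r - 2) (by linarith : (0:ℤ) ≤ seqT r k),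
        mul_nonneg (by nlinarith : (0:ℤ) ≤ r ^ 2 - r) (by linarith : (0:ℤ) ≤ seqU r k - 1)]

lemma main_aux (r ε t u b c c' d d' : ℤ) (hr : 2 ≤ r) (hε2 : ε ^ 2 = 1)
    (hb : b = r ^ 2 - 1) (hP : t ^ 2 = (r ^ 2 - 1) * u ^ 2 + 1)
    (hc : c = r ^ 2 * u ^ 2 + 2 * ε * t * u)
    (hc' : c' = r ^ 2 * (t + r * u) ^ 2 + 2 * ε * (r * t + (r ^ 2 - 1) * u) * (t + r * u))
    (hd : d = t + ε * u) (hd' : d' = (r * t + (r ^ 2 - 1) * u) + ε * (t + r * u))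
    (hd2 : 2 ≤ d) (hd2' : 2 ≤ d') (hdne : d ≠ r) (hdne' : d' ≠ r) (hdlt : d < d') :
    (({1, b, c, c'} : Finset ℤ).card = 4 ∧ IsDiophTuple {1, b, c, c'}) ∧
    (1 + b - c - c') ^ 2 = 4 * (b + 1) * (c * c' + 1) := by
  have hP' : (r * t + (r ^ 2 - 1) * u) ^ 2 = (r ^ 2 - 1) * (t + r * u) ^ 2 + 1 := by
    linear_combination hP
  have hsq1 : c + 1 = d ^ 2 := by rw [hc, hd]; exact sq1 r ε t u hP hε2
  have hsq1' : c' + 1 = d' ^ 2 := by rw [hc', hd']; exact sq1 r ε (r * t + (r ^ 2 - 1) * u) (t + r * u) hP' hε2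
  have hsqb : b * c + 1 = ((r ^ 2 - 1) * u + ε * t) ^ 2 := by
    rw [hb, hc]; exact sqb r ε t u hP hε2
  have hsqb' : b * c' + 1 = ((r ^ 2 - 1) * (t + r * u) + ε * (r * t + (r ^ 2 - 1) * u)) ^ 2 := by
    rw [hb, hc']; exact sqb r ε (r * t + (r ^ 2 - 1) * u) (t + r * u) hP' hε2
  have hsqcc : c * c' + 1 = (d * d' - r) ^ 2 := by
    rw [hc, hc', hd, hd']; exact sqcc r ε t u hP hε2
  have hbpos : 3 ≤ b := by
    rw [hb, pow_two]
    linarith [mul_self_le_mul_self (by norm_num : (0:ℤ) ≤ 2) hr]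
  have hdd : 2 * 2 ≤ d * d := mul_self_le_mul_self (by norm_num) hd2
  have hdd' : 2 * 2 ≤ d' * d' := mul_self_le_mul_self (by norm_num) hd2'
  have hddlt : d * d < d' * d' := mul_self_lt_mul_self (by linarith) hdlt
  have e1 := hsq1
  have e1' := hsq1'
  rw [pow_two] at e1 e1'
  have hcpos : 3 ≤ c := by linarith
  have hcpos' : 3 ≤ c' := by linarith
  have hcc' : c < c' := by linarith
  have hcb : c ≠ b := by
    intro h
    have h0 : (d - r) * (d + r) = 0 := by
      rw [hb] at h; linear_combination h - hsq1
    rcases mul_eq_zero.mp h0 with h1 | h1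
    · exact hdne (by linarith)
    · linarith
  have hcb' : c' ≠ b := by
    intro h
    have h0 : (d' - r) * (d' + r) = 0 := by
      rw [hb] at h; linear_combination h - hsq1'
    rcases mul_eq_zero.mp h0 with h1 | h1
    · exact hdne' (by linarith)
    · linarith
  have h1b : (1 : ℤ) ≠ b := by linarith
  have h1c : (1 : ℤ) ≠ c := by linarith
  have h1c' : (1 : ℤ) ≠ c' := by linarith
  have hbc : b ≠ c := fun h => hcb h.symm
  have hbc' : b ≠ c' := fun h => hcb' h.symm
  have hcne : c ≠ c' := by linarith
  refine ⟨⟨?_, ?_, ?_⟩, ?_⟩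
  · rw [Finset.card_insert_of_notMem (by simp [h1b, h1c, h1c']),
      Finset.card_insert_of_notMem (by simp [hbc, hbc']),
      Finset.card_insert_of_notMem (by simp [hcne]), Finset.card_singleton]
  · intro x hx
    simp only [Finset.mem_insert, Finset.mem_singleton] at hx
    rcases hx with rfl | rfl | rfl | rfl <;> linarith
  · intro x hx y hy hxy
    simp only [Finset.mem_insert, Finset.mem_singleton] at hx hy
    rcases hx with rfl | rfl | rfl | rfl <;> rcases hy with rfl | rfl | rfl | rfl
    · exact absurd rfl hxy
    · exact ⟨r, by rw [hb]; ring⟩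
    · exact ⟨d, by linear_combination hsq1⟩
    · exact ⟨d', by linear_combination hsq1'⟩
    · exact ⟨r, by rw [hb]; ring⟩
    · exact absurd rfl hxy
    · exact ⟨(r ^ 2 - 1) * u + ε * t, by linear_combination hsqb⟩
    · exact ⟨(r ^ 2 - 1) * (t + r * u) + ε * (r * t + (r ^ 2 - 1) * u), by linear_combination hsqb'⟩
    · exact ⟨d, by linear_combination hsq1⟩
    · exact ⟨(r ^ 2 - 1) * u + ε * t, by linear_combination hsqb⟩
    · exact absurd rfl hxy
    · exact ⟨d * d' - r, by linear_combination hsqcc⟩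
    · exact ⟨d', by linear_combination hsq1'⟩
    · exact ⟨(r ^ 2 - 1) * (t + r * u) + ε * (r * t + (r ^ 2 - 1) * u), by linear_combination hsqb'⟩
    · exact ⟨d * d' - r, by linear_combination hsqcc⟩
    · exact absurd rfl hxy
  · rw [hb, hc, hc']
    exact regid r ε t u hP hε2

/-- {1, b, c_k^(ε), c_{k+1}^(ε)} is a regular Diophantine quadruple. -/
theorem stmt3 (r : ℤ) (hr : 2 ≤ r) (b : ℤ) (hb : b = r ^ 2 - 1)
    (k : ℕ) (hk : 1 ≤ k) (ε : ℤ) (hε : ε = 1 ∨ ε = -1) (hr3 : ε = -1 → 3 ≤ r) :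
    (({1, b, cseq r ε k, cseq r ε (k + 1)} : Finset ℤ).card = 4 ∧
      IsDiophTuple {1, b, cseq r ε k, cseq r ε (k + 1)}) ∧
    (1 + b - cseq r ε k - cseq r ε (k + 1)) ^ 2 =
      4 * (b + 1) * (cseq r ε k * cseq r ε (k + 1) + 1) := by
  have hε2 : ε ^ 2 = 1 := by rcases hε with rfl | rfl <;> norm_num
  obtain ⟨hT', hU'⟩ := seq_step r k
  have hc : cseq r ε k = r ^ 2 * (seqU r k) ^ 2 + 2 * ε * (seqT r k) * (seqU r k) := rfl
  have hc' : cseq r ε (k + 1) = r ^ 2 * (seqT r k + r * seqU r k) ^ 2 +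
      2 * ε * (r * seqT r k + (r ^ 2 - 1) * seqU r k) * (seqT r k + r * seqU r k) := by
    simp only [cseq, hT', hU']
  obtain ⟨hd2, hdne, hdlt⟩ := dfacts r ε hr hε hr3 k hk
  obtain ⟨hd2', hdne', _⟩ := dfacts r ε hr hε hr3 (k + 1) (by omega)
  rw [hT', hU'] at hd2' hdne' hdlt
  exact main_aux r ε (seqT r k) (seqU r k) b (cseq r ε k) (cseq r ε (k + 1))
    (seqT r k + ε * seqU r k)
    ((r * seqT r k + (r ^ 2 - 1) * seqU r k) + ε * (seqT r k + r * seqU r k))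
    hr hε2 hb (seq_pell r k) hc hc' rfl rfl hd2 hd2' hdne hdne' hdlt
end

section
/- Let r ≥ 2 be an integer, b = r² − 1, and ε ∈ {1, −1}. For every k ≥ 0 one has c_k^(ε) + 1 = (T_k + ε·U_k)² and b·c_k^(ε) + 1 = (ε·T_k + b·U_k)². Consequently, for k ≥ 1 (assuming r ≥ 3 when ε = −1), the set {1, b, c_k^(ε)} is a Diophantine triple. -/
lemma seqStep (r : ℤ) (k : ℕ) :
    seqT r (k + 1) = r * seqT r k + (r ^ 2 - 1) * seqU r k ∧
    seqU r (k + 1) = seqT r k + r * seqU r k := by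
  induction k with
  | zero => constructor <;> simp [seqT, seqU]
  | succ n ih =>
    obtain ⟨h1, h2⟩ := ih
    constructor
    · show 2 * r * seqT r (n + 1) - seqT r n = _
      linear_combination (2 * r - r) * h1 - (r ^ 2 - 1) * h2
    · show 2 * r * seqU r (n + 1) - seqU r n = _
      linear_combination (2 * r - r) * h2 - h1

lemma seqPell (r : ℤ) (k : ℕ) :
    seqT r k ^ 2 - (r ^ 2 - 1) * seqU r k ^ 2 = 1 := by
  induction k with
  | zero => simp [seqT, seqU]
  | succ n ih =>
    obtain ⟨h1, h2⟩ := seqStep r n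
    rw [h1, h2]
    linear_combination ih

lemma seqBounds (r : ℤ) (hr : 2 ≤ r) : ∀ k : ℕ, 1 ≤ k →
    1 ≤ seqU r k ∧ 1 ≤ seqT r k ∧ seqT r k ≤ r * seqU r k := by
  intro k hk
  induction k, hk using Nat.le_induction with
  | base => refine ⟨le_refl 1, by simpa [seqT] using (by linarith : (1:ℤ) ≤ r), ?_⟩
            simp [seqT, seqU]
  | succ n hn ih =>
    obtain ⟨hU, hT, hTU⟩ := ih
    obtain ⟨h1, h2⟩ := seqStep r n
    refine ⟨by nlinarith, by nlinarith, by nlinarith⟩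

lemma sq_ne_sq_add_one (w a : ℤ) (ha : 0 < a) : w ^ 2 ≠ a ^ 2 + 1 := by
  intro h
  have h1 : a < |w| := by
    by_contra hc
    push_neg at hc
    nlinarith [sq_abs w, abs_nonneg w]
  have h2 : a + 1 ≤ |w| := h1
  nlinarith [sq_abs w, abs_nonneg w, mul_le_mul h2 h2 (by linarith) (abs_nonneg w)]

/-- For every k ≥ 0, c_k^(ε) + 1 = (T_k + ε·U_k)² and b·c_k^(ε) + 1 = (ε·T_k + b·U_k)²;
consequently, for k ≥ 1 (assuming r ≥ 3 when ε = −1), {1, b, c_k^(ε)} is a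
Diophantine triple. -/
theorem stmt4 (r : ℤ) (hr : 2 ≤ r) (b : ℤ) (hb : b = r ^ 2 - 1)
    (ε : ℤ) (hε : ε = 1 ∨ ε = -1) :
    (∀ k : ℕ, cseq r ε k + 1 = (seqT r k + ε * seqU r k) ^ 2 ∧
      b * cseq r ε k + 1 = (ε * seqT r k + b * seqU r k) ^ 2) ∧
    (∀ k : ℕ, 1 ≤ k → (ε = -1 → 3 ≤ r) →
      ({1, b, cseq r ε k} : Finset ℤ).card = 3 ∧ IsDiophTuple {1, b, cseq r ε k}) := by
  have hε2 : ε ^ 2 = 1 := by rcases hε with rfl | rfl <;> norm_num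
  have key : ∀ k : ℕ, cseq r ε k + 1 = (seqT r k + ε * seqU r k) ^ 2 ∧
      b * cseq r ε k + 1 = (ε * seqT r k + b * seqU r k) ^ 2 := by
    intro k
    have hP := seqPell r k
    rw [hb]
    constructor
    · simp only [cseq]
      linear_combination -hP - seqU r k ^ 2 * hε2
    · simp only [cseq]
      linear_combination -hP - seqT r k ^ 2 * hε2
  refine ⟨key, ?_⟩
  intro k hk hr3
  obtain ⟨hU, hT, hTU⟩ := seqBounds r hr k hk
  have hU2 : 1 ≤ seqU r k ^ 2 := by nlinarith
  have hcpos : 0 < cseq r ε k := by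
    have hcval : cseq r ε k
        = r ^ 2 * seqU r k ^ 2 + 2 * ε * seqT r k * seqU r k := rfl
    rcases hε with rfl | rfl
    · nlinarith [hcval]
    · have hr3' : 3 ≤ r := hr3 rfl
      have htu : seqT r k * seqU r k ≤ r * seqU r k * seqU r k :=
        mul_le_mul_of_nonneg_right hTU (by linarith)
      have h5 : 0 ≤ (r - 3) * (r + 1) * seqU r k ^ 2 :=
        mul_nonneg (mul_nonneg (by linarith) (by linarith)) (sq_nonneg _)
      nlinarith [hcval, htu, h5, hU2]
  have hbpos : 3 ≤ b := by nlinarith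
  have h1b : (1 : ℤ) ≠ b := by linarith
  have h1c : (1 : ℤ) ≠ cseq r ε k := by
    intro h
    have h2 := (key k).1
    rw [← h] at h2
    exact sq_ne_sq_add_one (seqT r k + ε * seqU r k) 1 one_pos (by linarith)
  have hbc : b ≠ cseq r ε k := by
    intro h
    have h2 := (key k).2
    rw [← h] at h2
    exact sq_ne_sq_add_one (ε * seqT r k + b * seqU r k) b (by linarith) (by linarith)
  have sq1b : ∃ w : ℤ, 1 * b + 1 = w ^ 2 := ⟨r, by rw [hb]; ring⟩
  have sqb1 : ∃ w : ℤ, b * 1 + 1 = w ^ 2 := ⟨r, by rw [hb]; ring⟩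
  have sq1c : ∃ w : ℤ, 1 * cseq r ε k + 1 = w ^ 2 :=
    ⟨seqT r k + ε * seqU r k, by rw [one_mul]; exact (key k).1⟩
  have sqc1 : ∃ w : ℤ, cseq r ε k * 1 + 1 = w ^ 2 :=
    ⟨seqT r k + ε * seqU r k, by rw [mul_one]; exact (key k).1⟩
  have sqbc : ∃ w : ℤ, b * cseq r ε k + 1 = w ^ 2 :=
    ⟨ε * seqT r k + b * seqU r k, (key k).2⟩
  have sqcb : ∃ w : ℤ, cseq r ε k * b + 1 = w ^ 2 :=
    ⟨ε * seqT r k + b * seqU r k, by rw [mul_comm]; exact (key k).2⟩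
  constructor
  · exact Finset.card_eq_three.mpr ⟨1, b, cseq r ε k, h1b, h1c, hbc, rfl⟩
  · constructor
    · intro x hx
      simp only [Finset.mem_insert, Finset.mem_singleton] at hx
      rcases hx with h | h | h <;> rw [h]
      · norm_num
      · linarith
      · exact hcpos
    · intro x hx y hy hxy
      simp only [Finset.mem_insert, Finset.mem_singleton] at hx hy
      rcases hx with h | h | h <;> rcases hy with h' | h' | h' <;>
        first
        | exact absurd (h.trans h'.symm) hxy
        | (rw [h, h']
           first
           | exact sq1b | exact sqb1 | exact sq1c
           | exact sqc1 | exact sqbc | exact sqcb)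
end
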